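/- If two weight vectors from the previous classification must sum to zero edge-by-edge (after matching some labels between the two squares, with no further identifications among each square's own edges), then the only possible pairs of partition types (X,Y) are (X,X) for X ∈ {A,B,C,D,E} and mixed pairs (X,Y) with X,Y ∈ {C,D,E}, X ≠ Y. -/
import Mathlib


/-- The five partition types of quadrilaterals supporting no 1-quad type
solution. -/
inductive QType
  | A | B | C | D | E
deriving DecidableEq

/-- The reduced nonzero-weight multisets of each type:
A' = {1,1,-1,-1}; B' = {2,-1,-1} or {-2,1,1}; C' = {1,-1}; D' = {2,-2};
E' = {1,-1}. -/
def reduced : QType → Set (Multiset ℝ)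
  | .A => {({1, 1, -1, -1} : Multiset ℝ)}
  | .B => {({2, -1, -1} : Multiset ℝ), ({-2, 1, 1} : Multiset ℝ)}
  | .C => {({1, -1} : Multiset ℝ)}
  | .D => {({2, -2} : Multiset ℝ)}
  | .E => {({1, -1} : Multiset ℝ)}

/-- Types `X`, `Y` are compatible if there are positive reals `α`, `β` and a
bijection between the nonzero entries of `α • X'` and the negatives of the
nonzero entries of `β • Y'`. -/
def compatible (X Y : QType) : Prop :=
  ∃ MX ∈ reduced X, ∃ MY ∈ reduced Y, ∃ α β : ℝ, 0 < α ∧ 0 < β ∧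
    MX.map (fun x => α * x) = MY.map (fun x => -(β * x))

lemma quad_swap (a b : ℝ) : ({a, a, b, b} : Multiset ℝ) = {b, b, a, a} := by
  simp only [Multiset.insert_eq_cons]
  ext x
  simp [Multiset.count_cons, Multiset.count_singleton]
  split_ifs <;> omega

/-- card of each reduced multiset -/
def qcard : QType → ℕ
  | .A => 4 | .B => 3 | _ => 2

lemma card_mem {X : QType} {M : Multiset ℝ} (h : M ∈ reduced X) :
    M.card = qcard X := by
  cases X <;> simp only [reduced, Set.mem_singleton_iff, Set.mem_insert_iff] at h <;>
    rcases h with rfl | rfl <;> simp [qcard, Multiset.insert_eq_cons]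

/-- The compatible pairs of partition types are exactly `(X, X)` for
`X ∈ {A,B,C,D,E}` and the mixed pairs `(X, Y)` with `X, Y ∈ {C, D, E}`,
`X ≠ Y`. -/
theorem stmt7 (X Y : QType) :
    compatible X Y ↔
      (X = Y ∨ (X ∈ ({QType.C, QType.D, QType.E} : Set QType) ∧
                Y ∈ ({QType.C, QType.D, QType.E} : Set QType))) := by
  constructor
  · rintro ⟨MX, hMX, MY, hMY, α, β, hα, hβ, h⟩
    have hc : MX.card = MY.card := by
      have := congrArg Multiset.card h
      simpa using this
    rw [card_mem hMX, card_mem hMY] at hc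
    cases X <;> cases Y <;> simp_all [qcard, Set.mem_insert_iff, Set.mem_singleton_iff]
  · rintro (rfl | ⟨hX, hY⟩)
    · cases X
      · exact ⟨_, rfl, _, rfl, 1, 1, one_pos, one_pos, by
          simp only [Multiset.insert_eq_cons, Multiset.map_cons, Multiset.map_singleton]
          norm_num
          try (ext x; simp [Multiset.count_cons, Multiset.count_singleton]; split_ifs <;> omega)⟩
      · exact ⟨{2, -1, -1}, Or.inl rfl, {-2, 1, 1}, Or.inr rfl, 1, 1, one_pos, one_pos, by
          simp only [Multiset.insert_eq_cons, Multiset.map_cons, Multiset.map_singleton]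
          norm_num
          try (ext x; simp [Multiset.count_cons, Multiset.count_singleton]; split_ifs <;> omega)⟩
      · exact ⟨_, rfl, _, rfl, 1, 1, one_pos, one_pos, by
          simp only [Multiset.insert_eq_cons, Multiset.map_cons, Multiset.map_singleton]
          norm_num
          try (ext x; simp [Multiset.count_cons, Multiset.count_singleton]; split_ifs <;> omega)⟩
      · exact ⟨_, rfl, _, rfl, 1, 1, one_pos, one_pos, by
          simp only [Multiset.insert_eq_cons, Multiset.map_cons, Multiset.map_singleton]
          norm_num
          try (ext x; simp [Multiset.count_cons, Multiset.count_singleton]; split_ifs <;> omega)⟩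
      · exact ⟨_, rfl, _, rfl, 1, 1, one_pos, one_pos, by
          simp only [Multiset.insert_eq_cons, Multiset.map_cons, Multiset.map_singleton]
          norm_num
          try (ext x; simp [Multiset.count_cons, Multiset.count_singleton]; split_ifs <;> omega)⟩
    · simp only [Set.mem_insert_iff, Set.mem_singleton_iff] at hX hY
      rcases hX with rfl | rfl | rfl <;> rcases hY with rfl | rfl | rfl
      · exact ⟨_, rfl, _, rfl, 1, 1, one_pos, one_pos, by
          simp only [Multiset.insert_eq_cons, Multiset.map_cons, Multiset.map_singleton]
          norm_num
          try (ext x; simp [Multiset.count_cons, Multiset.count_singleton]; split_ifs <;> omega)⟩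
      · exact ⟨_, rfl, _, rfl, 2, 1, two_pos, one_pos, by
          simp only [Multiset.insert_eq_cons, Multiset.map_cons, Multiset.map_singleton]
          norm_num
          try (ext x; simp [Multiset.count_cons, Multiset.count_singleton]; split_ifs <;> omega)⟩
      · exact ⟨_, rfl, _, rfl, 1, 1, one_pos, one_pos, by
          simp only [Multiset.insert_eq_cons, Multiset.map_cons, Multiset.map_singleton]
          norm_num
          try (ext x; simp [Multiset.count_cons, Multiset.count_singleton]; split_ifs <;> omega)⟩
      · exact ⟨_, rfl, _, rfl, 1, 2, one_pos, two_pos, by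
          simp only [Multiset.insert_eq_cons, Multiset.map_cons, Multiset.map_singleton]
          norm_num
          try (ext x; simp [Multiset.count_cons, Multiset.count_singleton]; split_ifs <;> omega)⟩
      · exact ⟨_, rfl, _, rfl, 1, 1, one_pos, one_pos, by
          simp only [Multiset.insert_eq_cons, Multiset.map_cons, Multiset.map_singleton]
          norm_num
          try (ext x; simp [Multiset.count_cons, Multiset.count_singleton]; split_ifs <;> omega)⟩
      · exact ⟨_, rfl, _, rfl, 1, 2, one_pos, two_pos, by
          simp only [Multiset.insert_eq_cons, Multiset.map_cons, Multiset.map_singleton]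
          norm_num
          try (ext x; simp [Multiset.count_cons, Multiset.count_singleton]; split_ifs <;> omega)⟩
      · exact ⟨_, rfl, _, rfl, 1, 1, one_pos, one_pos, by
          simp only [Multiset.insert_eq_cons, Multiset.map_cons, Multiset.map_singleton]
          norm_num
          try (ext x; simp [Multiset.count_cons, Multiset.count_singleton]; split_ifs <;> omega)⟩
      · exact ⟨_, rfl, _, rfl, 2, 1, two_pos, one_pos, by
          simp only [Multiset.insert_eq_cons, Multiset.map_cons, Multiset.map_singleton]
          norm_num
          try (ext x; simp [Multiset.count_cons, Multiset.count_singleton]; split_ifs <;> omega)⟩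
      · exact ⟨_, rfl, _, rfl, 1, 1, one_pos, one_pos, by
          simp only [Multiset.insert_eq_cons, Multiset.map_cons, Multiset.map_singleton]
          norm_num
          try (ext x; simp [Multiset.count_cons, Multiset.count_singleton]; split_ifs <;> omega)⟩
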